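/- arXiv:2001.00324 — 2 statements merged into one kernel-verified Lean document; each statement's English description precedes it below -/
import Mathlib

section
/- Let β ≥ 2 and k ≥ 1 be integers and let u, v : Ω → ℝ be smooth on Ω = [0,L]×[0,∞) with ∂_x u + ∂_y v = 0 and v(x,0)=0. Then on the boundary {y=0}, ∂_x^β ∂_y^{k-1}(v ∂_y u)(x,0) = − Σ_{β̃ ≤ β, 0 ≤ j ≤ k−2} C(k−1, j+1) C(β, β̃) (∂_x^{β̃+1} ∂_y^j u · ∂_x^{β−β̃} ∂_y^{k−j−1} u)(x,0), where C(·,·) are binomial coefficients (with C(j,i)=0 for i > j); in particular, for k = 1 the expression vanishes. -/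
open MeasureTheory Set Filter

/-- Partial derivative in the first (tangential) variable. -/
noncomputable def pdx (f : ℝ → ℝ → ℝ) : ℝ → ℝ → ℝ := fun x y => deriv (fun t => f t y) x

/-- Partial derivative in the second (normal) variable. -/
noncomputable def pdy (f : ℝ → ℝ → ℝ) : ℝ → ℝ → ℝ := fun x y => deriv (f x) y

section Aux

/-- Joint smoothness of a curried function. -/
def Sm (f : ℝ → ℝ → ℝ) : Prop := ContDiff ℝ ((⊤ : ℕ∞) : WithTop ℕ∞) (fun p : ℝ × ℝ => f p.1 p.2)

lemma Sm.sliceY {f : ℝ → ℝ → ℝ} (hf : Sm f) (x : ℝ) :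
    ContDiff ℝ ((⊤ : ℕ∞) : WithTop ℕ∞) (f x) :=
  hf.comp ((contDiff_const (c := x)).prodMk contDiff_id)

lemma Sm.sliceX {f : ℝ → ℝ → ℝ} (hf : Sm f) (y : ℝ) :
    ContDiff ℝ ((⊤ : ℕ∞) : WithTop ℕ∞) (fun t => f t y) :=
  hf.comp (contDiff_id.prodMk (contDiff_const (c := y)))

lemma hasDerivAt_slice1 {f : ℝ → ℝ → ℝ} (hf : Sm f) (x y : ℝ) :
    HasDerivAt (fun t => f t y) ((fderiv ℝ (fun p : ℝ × ℝ => f p.1 p.2) (x, y)) (1, 0)) x := by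
  have hF : HasFDerivAt (fun p : ℝ × ℝ => f p.1 p.2)
      (fderiv ℝ (fun p : ℝ × ℝ => f p.1 p.2) (x, y)) (x, y) :=
    (hf.differentiable (by simp)).differentiableAt.hasFDerivAt
  have hline : HasDerivAt (fun t : ℝ => ((t, y) : ℝ × ℝ)) ((1 : ℝ), (0 : ℝ)) x :=
    (hasDerivAt_id x).prodMk (hasDerivAt_const x y)
  exact hF.comp_hasDerivAt x hline

lemma hasDerivAt_slice2 {f : ℝ → ℝ → ℝ} (hf : Sm f) (x y : ℝ) :
    HasDerivAt (f x) ((fderiv ℝ (fun p : ℝ × ℝ => f p.1 p.2) (x, y)) (0, 1)) y := by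
  have hF : HasFDerivAt (fun p : ℝ × ℝ => f p.1 p.2)
      (fderiv ℝ (fun p : ℝ × ℝ => f p.1 p.2) (x, y)) (x, y) :=
    (hf.differentiable (by simp)).differentiableAt.hasFDerivAt
  have hline : HasDerivAt (fun t : ℝ => ((x, t) : ℝ × ℝ)) ((0 : ℝ), (1 : ℝ)) y :=
    (hasDerivAt_const y x).prodMk (hasDerivAt_id y)
  exact hF.comp_hasDerivAt y hline

lemma pdx_eq_fderiv {f : ℝ → ℝ → ℝ} (hf : Sm f) (x y : ℝ) :
    pdx f x y = (fderiv ℝ (fun p : ℝ × ℝ => f p.1 p.2) (x, y)) (1, 0) :=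
  (hasDerivAt_slice1 hf x y).deriv

lemma pdy_eq_fderiv {f : ℝ → ℝ → ℝ} (hf : Sm f) (x y : ℝ) :
    pdy f x y = (fderiv ℝ (fun p : ℝ × ℝ => f p.1 p.2) (x, y)) (0, 1) :=
  (hasDerivAt_slice2 hf x y).deriv

lemma sm_fderiv_apply {f : ℝ → ℝ → ℝ} (hf : Sm f) (w : ℝ × ℝ) :
    Sm (fun x y => (fderiv ℝ (fun p : ℝ × ℝ => f p.1 p.2) (x, y)) w) := by
  unfold Sm
  have h1 : ContDiff ℝ ((⊤ : ℕ∞) : WithTop ℕ∞) (fderiv ℝ (fun p : ℝ × ℝ => f p.1 p.2)) :=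
    hf.fderiv_right (by exact_mod_cast le_refl _)
  exact h1.clm_apply contDiff_const

lemma sm_pdx {f : ℝ → ℝ → ℝ} (hf : Sm f) : Sm (pdx f) := by
  have h := sm_fderiv_apply hf ((1 : ℝ), (0 : ℝ))
  unfold Sm at h ⊢
  have e : (fun p : ℝ × ℝ => pdx f p.1 p.2)
      = fun p : ℝ × ℝ => (fderiv ℝ (fun p : ℝ × ℝ => f p.1 p.2) (p.1, p.2)) (1, 0) := by
    funext p; exact pdx_eq_fderiv hf p.1 p.2
  rw [e]; exact h

lemma sm_pdy {f : ℝ → ℝ → ℝ} (hf : Sm f) : Sm (pdy f) := by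
  have h := sm_fderiv_apply hf ((0 : ℝ), (1 : ℝ))
  unfold Sm at h ⊢
  have e : (fun p : ℝ × ℝ => pdy f p.1 p.2)
      = fun p : ℝ × ℝ => (fderiv ℝ (fun p : ℝ × ℝ => f p.1 p.2) (p.1, p.2)) (0, 1) := by
    funext p; exact pdy_eq_fderiv hf p.1 p.2
  rw [e]; exact h

lemma sm_pdx_iter {f : ℝ → ℝ → ℝ} (hf : Sm f) (n : ℕ) : Sm (pdx^[n] f) := by
  induction n with
  | zero => exact hf
  | succ n ih => rw [Function.iterate_succ_apply']; exact sm_pdx ih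

lemma sm_pdy_iter {f : ℝ → ℝ → ℝ} (hf : Sm f) (n : ℕ) : Sm (pdy^[n] f) := by
  induction n with
  | zero => exact hf
  | succ n ih => rw [Function.iterate_succ_apply']; exact sm_pdy ih

/-- Mixed partials commute for jointly smooth functions. -/
lemma pdx_pdy_comm {f : ℝ → ℝ → ℝ} (hf : Sm f) : pdx (pdy f) = pdy (pdx f) := by
  funext x y
  set F := fun q : ℝ × ℝ => f q.1 q.2 with hF
  have hdF : ContDiff ℝ ((⊤ : ℕ∞) : WithTop ℕ∞) (fderiv ℝ F) :=
    hf.fderiv_right (by exact_mod_cast le_refl _)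
  have hc : DifferentiableAt ℝ (fderiv ℝ F) (x, y) :=
    (hdF.differentiable (by simp)).differentiableAt
  have happ : ∀ (w z : ℝ × ℝ),
      fderiv ℝ (fun p : ℝ × ℝ => (fderiv ℝ F p) w) (x, y) z
        = fderiv ℝ (fderiv ℝ F) (x, y) z w := by
    intro w z
    rw [fderiv_clm_apply hc (differentiableAt_const w)]
    simp
  have hsymm : ∀ v w : ℝ × ℝ,
      fderiv ℝ (fderiv ℝ F) (x, y) v w = fderiv ℝ (fderiv ℝ F) (x, y) w v := by
    intro v w
    exact second_derivative_symmetric (f := F) (f' := fderiv ℝ F)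
      (fun z => ((hf.differentiable (by simp)).differentiableAt
        (x := z)).hasFDerivAt)
      ((hdF.differentiable (by simp)).differentiableAt.hasFDerivAt) v w
  have e1 : pdx (pdy f) x y = fderiv ℝ (fderiv ℝ F) (x, y) (1, 0) (0, 1) := by
    rw [pdx_eq_fderiv (sm_pdy hf) x y]
    have e : (fun p : ℝ × ℝ => pdy f p.1 p.2) = fun p : ℝ × ℝ => (fderiv ℝ F p) (0, 1) := by
      funext p; exact pdy_eq_fderiv hf p.1 p.2
    rw [e, happ]
  have e2 : pdy (pdx f) x y = fderiv ℝ (fderiv ℝ F) (x, y) (0, 1) (1, 0) := by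
    rw [pdy_eq_fderiv (sm_pdx hf) x y]
    have e : (fun p : ℝ × ℝ => pdx f p.1 p.2) = fun p : ℝ × ℝ => (fderiv ℝ F p) (1, 0) := by
      funext p; exact pdx_eq_fderiv hf p.1 p.2
    rw [e, happ]
  rw [e1, e2, hsymm]

lemma pdx_pdy_iter_comm {f : ℝ → ℝ → ℝ} (hf : Sm f) (m : ℕ) :
    pdy^[m] (pdx f) = pdx (pdy^[m] f) := by
  induction m generalizing f with
  | zero => rfl
  | succ m ih =>
    rw [Function.iterate_succ_apply, Function.iterate_succ_apply,
      ← pdx_pdy_comm hf, ih (sm_pdy hf)]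

/- Bridging lemmas to one-variable iterated derivatives. -/
lemma pdy_iter (f : ℝ → ℝ → ℝ) (n : ℕ) (x : ℝ) : (pdy^[n] f) x = deriv^[n] (f x) := by
  induction n generalizing f with
  | zero => rfl
  | succ n ih =>
    rw [Function.iterate_succ_apply, Function.iterate_succ_apply]
    rw [ih (pdy f)]
    rfl

lemma pdx_iter (f : ℝ → ℝ → ℝ) (n : ℕ) (x y : ℝ) :
    (pdx^[n] f) x y = deriv^[n] (fun t => f t y) x := by
  induction n generalizing x with
  | zero => rfl
  | succ n ih =>
    rw [Function.iterate_succ_apply', Function.iterate_succ_apply']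
    show deriv (fun t => (pdx^[n] f) t y) x = _
    congr 1
    funext t
    exact ih t

/- One-variable lemmas. -/
lemma cd_deriv {f : ℝ → ℝ} (hf : ContDiff ℝ ((⊤ : ℕ∞) : WithTop ℕ∞) f) :
    ContDiff ℝ ((⊤ : ℕ∞) : WithTop ℕ∞) (deriv f) := (contDiff_infty_iff_deriv.mp hf).2

lemma iter_deriv_zero (n : ℕ) : deriv^[n] (fun _ : ℝ => (0 : ℝ)) = fun _ => 0 := by
  induction n with
  | zero => rfl
  | succ n ih => rw [Function.iterate_succ_apply, show deriv (fun _ : ℝ => (0:ℝ)) = fun _ => 0 by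
      funext t; simp, ih]

lemma iter_deriv_add {f g : ℝ → ℝ} (hf : ContDiff ℝ ((⊤ : ℕ∞) : WithTop ℕ∞) f)
    (hg : ContDiff ℝ ((⊤ : ℕ∞) : WithTop ℕ∞) g) (n : ℕ) :
    deriv^[n] (fun t => f t + g t) = fun t => deriv^[n] f t + deriv^[n] g t := by
  induction n generalizing f g with
  | zero => rfl
  | succ n ih =>
    rw [Function.iterate_succ_apply, Function.iterate_succ_apply, Function.iterate_succ_apply]
    have e : deriv (fun t => f t + g t) = fun t => deriv f t + deriv g t := by
      funext t
      exact deriv_fun_add ((hf.differentiable (by simp)).differentiableAt)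
        ((hg.differentiable (by simp)).differentiableAt)
    rw [e, ih (cd_deriv hf) (cd_deriv hg)]

lemma iter_deriv_const_mul (c : ℝ) {f : ℝ → ℝ} (hf : ContDiff ℝ ((⊤ : ℕ∞) : WithTop ℕ∞) f)
    (n : ℕ) : deriv^[n] (fun t => c * f t) = fun t => c * deriv^[n] f t := by
  induction n generalizing f with
  | zero => rfl
  | succ n ih =>
    rw [Function.iterate_succ_apply, Function.iterate_succ_apply]
    have e : deriv (fun t => c * f t) = fun t => c * deriv f t := by
      funext t
      exact deriv_const_mul c ((hf.differentiable (by simp)).differentiableAt)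
    rw [e, ih (cd_deriv hf)]

lemma iter_deriv_sum {ι : Type*} (s : Finset ι) (F : ι → ℝ → ℝ)
    (hF : ∀ i ∈ s, ContDiff ℝ ((⊤ : ℕ∞) : WithTop ℕ∞) (F i)) (n : ℕ) :
    deriv^[n] (fun t => ∑ i ∈ s, F i t) = fun t => ∑ i ∈ s, deriv^[n] (F i) t := by
  induction n generalizing F with
  | zero => rfl
  | succ n ih =>
    rw [Function.iterate_succ_apply]
    have e : deriv (fun t => ∑ i ∈ s, F i t) = fun t => ∑ i ∈ s, deriv (F i) t := by
      funext t
      exact deriv_fun_sum fun i hi =>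
        (((hF i hi).differentiable (by simp)).differentiableAt)
    rw [e, ih (fun i => deriv (F i)) (fun i hi => cd_deriv (hF i hi))]
    funext t
    refine Finset.sum_congr rfl fun i _ => ?_
    rw [← Function.iterate_succ_apply]

/-- Iterated Leibniz rule in one variable. -/
lemma iter_deriv_mul {f g : ℝ → ℝ} (hf : ContDiff ℝ ((⊤ : ℕ∞) : WithTop ℕ∞) f)
    (hg : ContDiff ℝ ((⊤ : ℕ∞) : WithTop ℕ∞) g) (n : ℕ) :
    deriv^[n] (fun t => f t * g t)
      = fun t => ∑ i ∈ Finset.range (n + 1),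
          (n.choose i : ℝ) * (deriv^[i] f t * deriv^[n - i] g t) := by
  induction n generalizing f g with
  | zero => funext t; simp
  | succ n ih =>
    rw [Function.iterate_succ_apply]
    have e : deriv (fun t => f t * g t) = fun t => deriv f t * g t + f t * deriv g t := by
      funext t
      exact deriv_fun_mul ((hf.differentiable (by simp)).differentiableAt)
        ((hg.differentiable (by simp)).differentiableAt)
    rw [e, iter_deriv_add ((cd_deriv hf).mul hg) (hf.mul (cd_deriv hg)) n,
      ih (cd_deriv hf) hg, ih hf (cd_deriv hg)]
    funext t
    set A : ℕ → ℝ := fun i => deriv^[i] f t with hA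
    set B : ℕ → ℝ := fun i => deriv^[i] g t with hB
    have hA' : ∀ i, deriv^[i] (deriv f) t = A (i + 1) := by
      intro i; rw [hA, ← Function.iterate_succ_apply]
    have hB' : ∀ i, deriv^[i] (deriv g) t = B (i + 1) := by
      intro i; rw [hB, ← Function.iterate_succ_apply]
    simp only [hA', hB']
    have fix : ∀ i ∈ Finset.range (n + 1),
        (n.choose i : ℝ) * (deriv^[i] f t * B (n - i + 1))
          = (n.choose i : ℝ) * (A i * B (n + 1 - i)) := by
      intro i hi
      rw [Finset.mem_range] at hi
      have e2 : n - i + 1 = n + 1 - i := by omega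
      rw [e2]
    have key : ∑ i ∈ Finset.range (n + 1), (n.choose i : ℝ) * (A (i+1) * B (n - i))
        + ∑ i ∈ Finset.range (n + 1), (n.choose i : ℝ) * (A i * B (n + 1 - i))
        = ∑ i ∈ Finset.range (n + 2), ((n+1).choose i : ℝ) * (A i * B (n + 1 - i)) := by
      have h2 : ∑ i ∈ Finset.range (n + 1), (n.choose i : ℝ) * (A i * B (n + 1 - i))
          = ∑ i ∈ Finset.range (n + 1), (n.choose (i+1) : ℝ) * (A (i+1) * B (n - i))
            + (n.choose 0 : ℝ) * (A 0 * B (n + 1)) := by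
        have hs := Finset.sum_range_succ' (fun i => (n.choose i : ℝ) * (A i * B (n + 1 - i))) (n + 1)
        have h3 : ∑ i ∈ Finset.range (n + 2), (n.choose i : ℝ) * (A i * B (n + 1 - i))
            = ∑ i ∈ Finset.range (n + 1), (n.choose i : ℝ) * (A i * B (n + 1 - i)) := by
          rw [Finset.sum_range_succ]
          simp [Nat.choose_succ_self]
        rw [← h3, hs]
        congr 1
        refine Finset.sum_congr rfl fun i hi => ?_
        have e2 : n + 1 - (i + 1) = n - i := by omega
        rw [e2]
      rw [h2, Finset.sum_range_succ' (fun i => ((n+1).choose i : ℝ) * (A i * B (n + 1 - i))) (n + 1)]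
      have h4 : ∀ i ∈ Finset.range (n + 1),
          (((n+1).choose (i+1) : ℕ) : ℝ) * (A (i+1) * B (n + 1 - (i+1)))
            = (n.choose i : ℝ) * (A (i+1) * B (n - i))
              + (n.choose (i+1) : ℝ) * (A (i+1) * B (n - i)) := by
        intro i _
        have e2 : n + 1 - (i + 1) = n - i := by omega
        rw [e2, Nat.choose_succ_succ]
        push_cast
        ring
      rw [Finset.sum_congr rfl h4, Finset.sum_add_distrib]
      simp only [Nat.choose_zero_right, Nat.cast_one, one_mul, Nat.sub_zero]
      ring
    rw [Finset.sum_congr rfl fix, key]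

/-- If a smooth function vanishes on a set contained in the closure of its interior,
so does its derivative. -/
lemma deriv_eqOn_zero {g : ℝ → ℝ} (hg : ContDiff ℝ ((⊤ : ℕ∞) : WithTop ℕ∞) g) {s : Set ℝ}
    (hs : s ⊆ closure (interior s)) (h0 : ∀ x ∈ s, g x = 0) :
    ∀ x ∈ s, deriv g x = 0 := by
  have hint : Set.EqOn (deriv g) (fun _ => 0) (interior s) := by
    intro z hz
    have hev : g =ᶠ[nhds z] fun _ => 0 :=
      Filter.eventually_of_mem (isOpen_interior.mem_nhds hz)
        (fun y hy => h0 y (interior_subset hy))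
    rw [Filter.EventuallyEq.deriv_eq hev]
    simp
  have hcl : Set.EqOn (deriv g) (fun _ => 0) (closure (interior s)) :=
    hint.closure (hg.continuous_deriv (by exact_mod_cast le_top)) continuous_const
  exact fun z hz => hcl (hs hz)

lemma Icc_subset_closure_interior {L : ℝ} (hL : 0 < L) :
    Icc (0:ℝ) L ⊆ closure (interior (Icc (0:ℝ) L)) := by
  rw [interior_Icc, closure_Ioo hL.ne]

lemma Ici_subset_closure_interior : Ici (0:ℝ) ⊆ closure (interior (Ici (0:ℝ))) := by
  rw [interior_Ici, closure_Ioi]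

end Aux

/-- Commutator boundary identity: for smooth `u, v` with `∂ₓ u + ∂_y v = 0` and
`v(x,0) = 0`, on the boundary `{y=0}`,
`∂ₓ^β ∂_y^{k-1}(v ∂_y u) = − Σ_{β̃ ≤ β} Σ_{0 ≤ j ≤ k−2} C(k−1,j+1) C(β,β̃)
  ∂ₓ^{β̃+1}∂_y^j u · ∂ₓ^{β−β̃}∂_y^{k−j−1} u`; in particular, for `k = 1` it vanishes. -/
theorem stmt15 (L : ℝ) (hL : 0 < L) (β k : ℕ) (hβ : 2 ≤ β) (hk : 1 ≤ k)
    (u v : ℝ → ℝ → ℝ)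
    (hu : ContDiff ℝ (⊤ : ℕ∞) (fun p : ℝ × ℝ => u p.1 p.2))
    (hv : ContDiff ℝ (⊤ : ℕ∞) (fun p : ℝ × ℝ => v p.1 p.2))
    (hdiv : ∀ x ∈ Icc (0:ℝ) L, ∀ y ∈ Ici (0:ℝ), pdx u x y + pdy v x y = 0)
    (hv0 : ∀ x, v x 0 = 0) :
    ∀ x ∈ Icc (0:ℝ) L,
      (pdx^[β] (pdy^[k - 1] (fun a b => v a b * pdy u a b))) x 0
        = -(∑ β' ∈ Finset.range (β + 1), ∑ j ∈ Finset.range (k - 1),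
            (((k - 1).choose (j + 1) : ℝ) * ((β.choose β') : ℝ)) *
              ((pdx^[β' + 1] (pdy^[j] u)) x 0 *
                (pdx^[β - β'] (pdy^[k - j - 1] u)) x 0)) := by
  obtain ⟨k', rfl⟩ : ∃ k', k = k' + 1 := ⟨k - 1, by omega⟩
  intro x hx
  have su : Sm u := hu.of_le (by simp)
  have sv : Sm v := hv.of_le (by simp)
  -- simplify `k' + 1 - 1` to `k'` and `k' + 1 - j - 1` to `k' - j`
  simp only [Nat.add_sub_cancel]
  have hsub : ∀ j : ℕ, k' + 1 - j - 1 = k' - j := fun j => by omega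
  -- step 0: the `v`-slice on the boundary vanishes, together with its x-derivatives
  have hvslice : ∀ (m : ℕ) (t : ℝ), (pdx^[m] v) t 0 = 0 := by
    intro m t
    rw [pdx_iter]
    have e : (fun s => v s 0) = fun _ : ℝ => (0:ℝ) := funext hv0
    rw [e, iter_deriv_zero]
  -- the divergence-free function
  set W : ℝ → ℝ → ℝ := fun a b => pdx u a b + pdy v a b with hWdef
  have sW : Sm W := by
    have h1 : ContDiff ℝ ((⊤ : ℕ∞) : WithTop ℕ∞) (fun p : ℝ × ℝ => pdx u p.1 p.2) := sm_pdx su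
    have h2 : ContDiff ℝ ((⊤ : ℕ∞) : WithTop ℕ∞) (fun p : ℝ × ℝ => pdy v p.1 p.2) := sm_pdy sv
    exact h1.add h2
  -- y-derivatives of W vanish on the domain
  have vanY : ∀ (m : ℕ), ∀ a ∈ Icc (0:ℝ) L, ∀ b ∈ Ici (0:ℝ), (pdy^[m] W) a b = 0 := by
    intro m
    induction m with
    | zero => exact fun a ha b hb => hdiv a ha b hb
    | succ m ih =>
      intro a ha b hb
      rw [Function.iterate_succ_apply']
      show deriv ((pdy^[m] W) a) b = 0
      exact deriv_eqOn_zero ((sm_pdy_iter sW m).sliceY a) Ici_subset_closure_interior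
        (ih a ha) b hb
  -- mixed derivatives of W vanish on the boundary
  have vanXY : ∀ (m n : ℕ), ∀ a ∈ Icc (0:ℝ) L, (pdx^[n] (pdy^[m] W)) a 0 = 0 := by
    intro m n
    induction n with
    | zero => exact fun a ha => vanY m a ha 0 self_mem_Ici
    | succ n ih =>
      intro a ha
      rw [Function.iterate_succ_apply']
      show deriv (fun t => (pdx^[n] (pdy^[m] W)) t 0) a = 0
      exact deriv_eqOn_zero ((sm_pdx_iter (sm_pdy_iter sW m) n).sliceX 0)
        (Icc_subset_closure_interior hL) ih a ha
  -- expansion of the y-derivatives of W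
  have Wexp : ∀ (m : ℕ) (a b : ℝ),
      (pdy^[m] W) a b = (pdy^[m] (pdx u)) a b + (pdy^[m+1] v) a b := by
    intro m a b
    have e0 : (pdy^[m] W) a = deriv^[m] (W a) := pdy_iter W m a
    have e1 : W a = fun s => pdx u a s + pdy v a s := rfl
    rw [e0, e1, iter_deriv_add ((sm_pdx su).sliceY a) ((sm_pdy sv).sliceY a) m]
    show deriv^[m] ((pdx u) a) b + deriv^[m] ((pdy v) a) b = _
    rw [pdy_iter (pdx u) m a, pdy_iter v (m+1) a, Function.iterate_succ_apply deriv m (v a)]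
    rfl
  -- key relation on the boundary
  have keyV : ∀ (j n : ℕ),
      (pdx^[n] (pdy^[j+1] v)) x 0 = -((pdx^[n+1] (pdy^[j] u)) x 0) := by
    intro j n
    have h1 : (pdx^[n] (pdy^[j] W)) x 0 = 0 := vanXY j n x hx
    have e : pdy^[j] W = fun p q => (pdy^[j] (pdx u)) p q + (pdy^[j+1] v) p q := by
      funext p q; exact Wexp j p q
    rw [e] at h1
    have hsplit : (pdx^[n] (fun p q => (pdy^[j] (pdx u)) p q + (pdy^[j+1] v) p q)) x 0
        = (pdx^[n] (pdy^[j] (pdx u))) x 0 + (pdx^[n] (pdy^[j+1] v)) x 0 := by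
      rw [pdx_iter]
      show deriv^[n] (fun t => (pdy^[j] (pdx u)) t 0 + (pdy^[j+1] v) t 0) x = _
      rw [iter_deriv_add ((sm_pdy_iter (sm_pdx su) j).sliceX 0)
        ((sm_pdy_iter sv (j+1)).sliceX 0) n]
      show deriv^[n] (fun t => (pdy^[j] (pdx u)) t 0) x
          + deriv^[n] (fun t => (pdy^[j+1] v) t 0) x = _
      rw [← pdx_iter (pdy^[j] (pdx u)) n x 0, ← pdx_iter (pdy^[j+1] v) n x 0]
    rw [hsplit] at h1
    have e2 : (pdx^[n] (pdy^[j] (pdx u))) x 0 = (pdx^[n+1] (pdy^[j] u)) x 0 := by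
      rw [pdx_pdy_iter_comm su j, Function.iterate_succ_apply pdx n (pdy^[j] u)]
    rw [e2] at h1
    linarith
  -- Step 1: Leibniz expansion in y
  have step1 : ∀ a b : ℝ, (pdy^[k'] (fun p q => v p q * pdy u p q)) a b
      = ∑ j ∈ Finset.range (k' + 1),
          (k'.choose j : ℝ) * ((pdy^[j] v) a b * (pdy^[k' + 1 - j] u) a b) := by
    intro a b
    have e0 : (pdy^[k'] (fun p q => v p q * pdy u p q)) a
        = deriv^[k'] ((fun p q => v p q * pdy u p q) a) := pdy_iter _ k' a
    have e1 : (fun p q => v p q * pdy u p q) a = fun s => (v a) s * (deriv (u a)) s := rfl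
    rw [e0, e1, iter_deriv_mul (sv.sliceY a) (cd_deriv (su.sliceY a)) k']
    show (∑ j ∈ Finset.range (k' + 1),
        (k'.choose j : ℝ) * (deriv^[j] (v a) b * deriv^[k' - j] (deriv (u a)) b)) = _
    refine Finset.sum_congr rfl fun j hj => ?_
    rw [Finset.mem_range] at hj
    have e2 : k' + 1 - j = k' - j + 1 := by omega
    rw [pdy_iter v j a, pdy_iter u (k' + 1 - j) a, e2,
      Function.iterate_succ_apply deriv (k' - j) (u a)]
  -- Step 2: Leibniz expansion in x
  have step2 : (pdx^[β] (pdy^[k'] (fun a b => v a b * pdy u a b))) x 0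
      = ∑ j ∈ Finset.range (k' + 1), ∑ b' ∈ Finset.range (β + 1),
          (k'.choose j : ℝ) * ((β.choose b' : ℝ) *
            ((pdx^[b'] (pdy^[j] v)) x 0 * (pdx^[β - b'] (pdy^[k' + 1 - j] u)) x 0)) := by
    rw [pdx_iter]
    have e1 : (fun t => (pdy^[k'] (fun a b => v a b * pdy u a b)) t 0)
        = fun t => ∑ j ∈ Finset.range (k' + 1),
            (k'.choose j : ℝ) * ((pdy^[j] v) t 0 * (pdy^[k' + 1 - j] u) t 0) := by
      funext t; exact step1 t 0
    rw [e1, iter_deriv_sum (Finset.range (k' + 1))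
      (fun j => fun t => (k'.choose j : ℝ) * ((pdy^[j] v) t 0 * (pdy^[k' + 1 - j] u) t 0))
      (fun j _ => contDiff_const.mul (((sm_pdy_iter sv j).sliceX 0).mul
        ((sm_pdy_iter su (k' + 1 - j)).sliceX 0))) β]
    show (∑ j ∈ Finset.range (k' + 1), deriv^[β]
        (fun t => (k'.choose j : ℝ) * ((pdy^[j] v) t 0 * (pdy^[k' + 1 - j] u) t 0)) x) = _
    refine Finset.sum_congr rfl fun j _ => ?_
    rw [iter_deriv_const_mul (k'.choose j : ℝ) (((sm_pdy_iter sv j).sliceX 0).mul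
      ((sm_pdy_iter su (k' + 1 - j)).sliceX 0)) β]
    show (k'.choose j : ℝ) * deriv^[β]
        (fun t => (pdy^[j] v) t 0 * (pdy^[k' + 1 - j] u) t 0) x = _
    rw [iter_deriv_mul ((sm_pdy_iter sv j).sliceX 0) ((sm_pdy_iter su (k' + 1 - j)).sliceX 0) β]
    show (k'.choose j : ℝ) * ∑ b' ∈ Finset.range (β + 1), (β.choose b' : ℝ) *
        (deriv^[b'] (fun t => (pdy^[j] v) t 0) x
          * deriv^[β - b'] (fun t => (pdy^[k' + 1 - j] u) t 0) x) = _
    rw [Finset.mul_sum]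
    refine Finset.sum_congr rfl fun b' _ => ?_
    rw [← pdx_iter (pdy^[j] v) b' x 0, ← pdx_iter (pdy^[k' + 1 - j] u) (β - b') x 0]
  -- Step 3: assemble
  rw [step2, Finset.sum_range_succ' (fun j => ∑ b' ∈ Finset.range (β + 1),
      (k'.choose j : ℝ) * ((β.choose b' : ℝ) *
        ((pdx^[b'] (pdy^[j] v)) x 0 * (pdx^[β - b'] (pdy^[k' + 1 - j] u)) x 0))) k']
  have hzero : (∑ b' ∈ Finset.range (β + 1),
      (k'.choose 0 : ℝ) * ((β.choose b' : ℝ) *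
        ((pdx^[b'] (pdy^[0] v)) x 0 * (pdx^[β - b'] (pdy^[k' + 1 - 0] u)) x 0))) = 0 := by
    refine Finset.sum_eq_zero fun b' _ => ?_
    have hz : (pdx^[b'] (pdy^[0] v)) x 0 = 0 := by
      simp only [Function.iterate_zero, id_eq]
      exact hvslice b' x
    rw [hz]
    ring
  rw [hzero, add_zero]
  have step3 : (∑ j ∈ Finset.range k', ∑ b' ∈ Finset.range (β + 1),
      (k'.choose (j + 1) : ℝ) * ((β.choose b' : ℝ) *
        ((pdx^[b'] (pdy^[j + 1] v)) x 0 * (pdx^[β - b'] (pdy^[k' + 1 - (j + 1)] u)) x 0)))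
      = ∑ j ∈ Finset.range k', ∑ b' ∈ Finset.range (β + 1),
          -(((k'.choose (j + 1) : ℝ) * (β.choose b' : ℝ)) *
            ((pdx^[b' + 1] (pdy^[j] u)) x 0 * (pdx^[β - b'] (pdy^[k' - j] u)) x 0)) := by
    refine Finset.sum_congr rfl fun j _ => Finset.sum_congr rfl fun b' _ => ?_
    have e1 : k' + 1 - (j + 1) = k' - j := by omega
    rw [e1, keyV j b']
    ring
  rw [step3, Finset.sum_comm]
  simp only [Finset.sum_neg_distrib]
  simp only [hsub]
end

section
/- Let u_s : Ω → ℝ be C¹ on Ω = [0,L]×[0,∞) with u_s ≥ c₀ > 0 and ‖y ∂_y u_s‖_{L∞} ≤ σ, and let v, g be C¹ on Ω with v(x,0) = g(x,0) = 0 and ∂_y v, ∂_y g ∈ L²(Ω). Then |∬_Ω ∂_y(v/u_s) · g · ∂_y u_s| ≤ C(c₀) σ (1 + σ) ‖∂_y v‖_{L²(Ω)} ‖∂_y g‖_{L²(Ω)}. -/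
set_option maxHeartbeats 1000000
open scoped ENNReal


open MeasureTheory Set Filter

lemma fiber_hasDerivAt (F : ℝ → ℝ → ℝ) (hF : ContDiff ℝ 1 (fun p : ℝ×ℝ => F p.1 p.2))
    (x y : ℝ) : HasDerivAt (F x) (fderiv ℝ (fun p : ℝ×ℝ => F p.1 p.2) (x,y) (0,1)) y := by
  have h1 : HasFDerivAt (fun p : ℝ×ℝ => F p.1 p.2)
      (fderiv ℝ (fun p : ℝ×ℝ => F p.1 p.2) (x,y)) (x,y) :=
    (hF.differentiable one_ne_zero (x,y)).hasFDerivAt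
  have h2 : HasDerivAt (fun t : ℝ => ((x,t) : ℝ×ℝ)) (0,1) y :=
    (hasDerivAt_const y x).prodMk (hasDerivAt_id y)
  exact h1.comp_hasDerivAt y h2

lemma deriv_fiber (F : ℝ → ℝ → ℝ) (hF : ContDiff ℝ 1 (fun p : ℝ×ℝ => F p.1 p.2))
    (x y : ℝ) : deriv (F x) y = fderiv ℝ (fun p : ℝ×ℝ => F p.1 p.2) (x,y) (0,1) :=
  (fiber_hasDerivAt F hF x y).deriv

lemma ptwise_bound (a b G U u y σ c₀ : ℝ) (hy : 0 < y) (hc₀ : 0 < c₀) (hσ : 0 ≤ σ)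
    (hu : c₀ ≤ u) (hU : |U| * y ≤ σ) :
    |(a * u - b * U) / u ^ 2 * G * U| ≤
      (σ/c₀) * (|a| * (|G|/y)) + (σ/c₀)^2 * ((|b|/y) * (|G|/y)) := by
  have hupos : 0 < u := lt_of_lt_of_le hc₀ hu
  have hU2 : |U| ≤ σ / y := (le_div_iff₀ hy).2 hU
  have hUu : |U| / u ≤ σ / (c₀ * y) := by
    calc |U| / u ≤ (σ / y) / c₀ := div_le_div₀ (by positivity) hU2 hc₀ hu
      _ = σ / (c₀ * y) := by rw [div_div, mul_comm]
  have h2 : |a * u - b * U| ≤ |a| * u + |b| * |U| := by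
    calc |a * u - b * U| ≤ |a * u| + |b * U| := abs_sub _ _
      _ = |a| * u + |b| * |U| := by rw [abs_mul, abs_mul, abs_of_pos hupos]
  calc |(a * u - b * U) / u ^ 2 * G * U| = |a * u - b * U| * |G| * |U| / u ^ 2 := by
        rw [abs_mul, abs_mul, abs_div, abs_pow, abs_of_pos hupos]; ring
    _ ≤ (|a| * u + |b| * |U|) * |G| * |U| / u ^ 2 := by gcongr
    _ = |a| * |G| * (|U| / u) + |b| * |G| * (|U| / u)^2 := by
        have hUU : |U| * |U| = U ^ 2 := by rw [← abs_mul, abs_mul_self, sq]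
        field_simp
    _ ≤ |a| * |G| * (σ / (c₀ * y)) + |b| * |G| * (σ / (c₀ * y))^2 := by
        gcongr <;> positivity
    _ = (σ/c₀) * (|a| * (|G|/y)) + (σ/c₀)^2 * ((|b|/y) * (|G|/y)) := by
        field_simp


lemma hardy_aux (f : ℝ → ℝ) (hf : ContDiff ℝ 1 f) (h0 : f 0 = 0) :
    ∫⁻ y in Ioi (0:ℝ), ENNReal.ofReal ((f y / y)^2) ≤
      4 * ∫⁻ y in Ioi (0:ℝ), ENNReal.ofReal (deriv f y ^ 2) := by
  set J := ∫⁻ y in Ioi (0:ℝ), ENNReal.ofReal (deriv f y ^ 2) with hJdef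
  rcases eq_or_ne J ⊤ with hT | hT
  · rw [hT]; simp
  have hf' : Continuous (deriv f) := hf.continuous_deriv le_rfl
  have hfc : Continuous f := hf.continuous
  have hint : IntegrableOn (fun y => deriv f y ^ 2) (Ioi 0) := by
    refine ⟨(hf'.pow 2).aestronglyMeasurable, ?_⟩
    rw [hasFiniteIntegral_iff_ofReal (Eventually.of_forall fun y => sq_nonneg _)]
    exact lt_of_le_of_ne le_top hT
  set Jr := ∫ y in Ioi (0:ℝ), deriv f y ^ 2 with hJrdef
  have hJr : ENNReal.ofReal Jr = J :=
    ofReal_integral_eq_lintegral_ofReal hint (Eventually.of_forall fun y => sq_nonneg _)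
  have hJrnn : 0 ≤ Jr := integral_nonneg fun y => sq_nonneg _
  -- key interval estimate
  have key : ∀ ε R : ℝ, 0 < ε → ε ≤ R →
      ∫ y in Ioc ε R, (f y / y)^2 ≤ 2 * (f ε ^ 2 / ε) + 4 * Jr := by
    intro ε R hε hεR
    have hRpos : 0 < R := lt_of_lt_of_le hε hεR
    have hpos : ∀ y ∈ uIcc ε R, 0 < y := by
      intro y hy
      rw [uIcc_of_le hεR] at hy
      exact lt_of_lt_of_le hε hy.1
    have hu : ∀ y ∈ uIcc ε R, HasDerivAt (fun y => f y ^ 2) (2 * f y * deriv f y) y := by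
      intro y _
      have := ((hf.differentiable one_ne_zero y).hasDerivAt (𝕜 := ℝ)).pow 2
      exact this.congr_deriv (by simp)
    have hv : ∀ y ∈ uIcc ε R, HasDerivAt (fun y => -(y⁻¹)) ((y^2)⁻¹) y := by
      intro y hy
      exact (hasDerivAt_inv (hpos y hy).ne').neg.congr_deriv (by ring)
    have hinv : ContinuousOn (fun y : ℝ => y⁻¹) (uIcc ε R) :=
      ContinuousOn.inv₀ continuousOn_id (fun y hy => (hpos y hy).ne')
    have hcont1 : ContinuousOn (fun y => 2 * f y * deriv f y) (uIcc ε R) :=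
      ((continuous_const.mul hfc).mul hf').continuousOn
    have hcont2 : ContinuousOn (fun y : ℝ => (y^2)⁻¹) (uIcc ε R) :=
      ContinuousOn.inv₀ (continuous_pow 2).continuousOn
        (fun y hy => pow_ne_zero 2 (hpos y hy).ne')
    have ibp := intervalIntegral.integral_mul_deriv_eq_deriv_mul hu hv
      (hcont1.intervalIntegrable) (hcont2.intervalIntegrable)
    have heq : EqOn (fun y => (f y / y)^2) (fun y => f y ^ 2 * (y^2)⁻¹) (uIcc ε R) := by
      intro y hy
      have hne := (hpos y hy).ne'
      simp only
      field_simp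
    set T := ∫ y in ε..R, (f y / y)^2 with hTdef
    set B := ∫ y in ε..R, deriv f y ^ 2 with hBdef
    have hT2 : T = f R ^ 2 * (-(R⁻¹)) - f ε ^ 2 * (-(ε⁻¹))
        - ∫ y in ε..R, 2 * f y * deriv f y * -(y⁻¹) := by
      rw [hTdef, intervalIntegral.integral_congr heq, ibp]
    -- continuity facts for integrability
    have hcR : ContinuousOn (fun y => (f y / y)^2) (uIcc ε R) :=
      ((hfc.continuousOn.div continuousOn_id (fun y hy => (hpos y hy).ne')).pow 2)
    have hcP : ContinuousOn (fun y => 2 * f y * deriv f y * -(y⁻¹)) (uIcc ε R) :=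
      hcont1.mul hinv.neg
    have hmono : ∫ y in ε..R, (-(2 * f y * deriv f y * -(y⁻¹)))
        ≤ ∫ y in ε..R, ((1/2) * (f y / y)^2 + 2 * deriv f y ^ 2) := by
      apply intervalIntegral.integral_mono_on hεR
      · exact hcP.neg.intervalIntegrable
      · exact ((continuousOn_const.mul hcR).add
          (continuousOn_const.mul (hf'.pow 2).continuousOn)).intervalIntegrable
      · intro y hy
        have hy0 : 0 < y := lt_of_lt_of_le hε hy.1
        have h1 : -(2 * f y * deriv f y * -(y⁻¹)) = 2 * (f y / y) * deriv f y := by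
          field_simp
        rw [h1]
        nlinarith [sq_nonneg (f y / y - 2 * deriv f y)]
    have hsplit : ∫ y in ε..R, ((1/2) * (f y / y)^2 + 2 * deriv f y ^ 2)
        = (1/2) * T + 2 * B := by
      rw [intervalIntegral.integral_add (f := fun y => (1/2) * (f y / y)^2)
            (g := fun y => 2 * deriv f y ^ 2)
            ((continuousOn_const.mul hcR).intervalIntegrable)
            ((continuousOn_const.mul (hf'.pow 2).continuousOn).intervalIntegrable),
          intervalIntegral.integral_const_mul, intervalIntegral.integral_const_mul]
    have hBJr : B ≤ Jr := by
      rw [hBdef, intervalIntegral.integral_of_le hεR]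
      apply setIntegral_mono_set hint
        (Eventually.of_forall fun y => sq_nonneg _)
      exact Eventually.of_forall (fun y hy => lt_trans hε hy.1)
    have hRterm : f R ^ 2 * (-(R⁻¹)) ≤ 0 := by
      have : 0 ≤ f R ^ 2 * R⁻¹ := mul_nonneg (sq_nonneg _) (inv_nonneg.2 hRpos.le)
      linarith
    have hneg : ∫ y in ε..R, 2 * f y * deriv f y * -(y⁻¹)
        = - ∫ y in ε..R, (-(2 * f y * deriv f y * -(y⁻¹))) := by
      rw [intervalIntegral.integral_neg]; ring
    have hTbound : T ≤ 2 * (f ε ^ 2 / ε) + 4 * Jr := by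
      have h3 : T ≤ f R ^ 2 * (-(R⁻¹)) + f ε ^ 2 * ε⁻¹ + ((1/2) * T + 2 * B) := by
        rw [hT2, hneg]
        have := hmono
        rw [hsplit] at this
        linarith
      have : T ≤ f ε ^ 2 * ε⁻¹ + (1/2) * T + 2 * Jr := by linarith
      have hdiv : f ε ^ 2 / ε = f ε ^ 2 * ε⁻¹ := div_eq_mul_inv _ _
      linarith
    rwa [← intervalIntegral.integral_of_le hεR]
  -- limit argument
  set ν := volume.withDensity (fun y => ENNReal.ofReal ((f y / y)^2)) with hνdef
  have hmeas : Measurable (fun y : ℝ => ENNReal.ofReal ((f y / y)^2)) :=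
    (((hfc.measurable.div measurable_id).pow_const 2)).ennreal_ofReal
  set s : ℕ → Set ℝ := fun n => Ioc ((n+1:ℝ)⁻¹) (n+1) with hsdef
  have hsmono : Monotone s := by
    intro m n hmn
    apply Ioc_subset_Ioc
    · apply inv_anti₀ (by positivity)
      exact_mod_cast by exact_mod_cast add_le_add_left (Nat.cast_le.2 hmn) 1
    · exact_mod_cast add_le_add_left (Nat.cast_le.2 hmn) 1
  have hsunion : ⋃ n, s n = Ioi (0:ℝ) := by
    ext y
    simp only [mem_iUnion, hsdef, mem_Ioc, mem_Ioi]
    constructor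
    · rintro ⟨n, h1, _⟩
      exact lt_trans (by positivity) h1
    · intro hy
      obtain ⟨n, hn⟩ := exists_nat_gt (max y⁻¹ y)
      refine ⟨n, ?_, ?_⟩
      · have h1 : y⁻¹ < n + 1 := lt_trans (lt_of_le_of_lt (le_max_left _ _) hn) (by linarith)
        calc ((n:ℝ)+1)⁻¹ < y⁻¹⁻¹ := by
              apply inv_strictAnti₀ (by positivity) h1
          _ = y := inv_inv y
      · exact le_of_lt (lt_trans (lt_of_le_of_lt (le_max_right _ _) hn) (by linarith))
  have hνs : ∀ n, ν (s n) = ∫⁻ y in s n, ENNReal.ofReal ((f y / y)^2) := by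
    intro n
    rw [hνdef, withDensity_apply _ measurableSet_Ioc]
  have hνIoi : ν (Ioi 0) = ∫⁻ y in Ioi (0:ℝ), ENNReal.ofReal ((f y / y)^2) := by
    rw [hνdef, withDensity_apply _ measurableSet_Ioi]
  have htend1 : Tendsto (fun n => ν (s n)) atTop (nhds (ν (Ioi 0))) := by
    rw [← hsunion]
    exact tendsto_measure_iUnion_atTop hsmono
  -- the bound sequence
  set c : ℕ → ℝ := fun n => f ((n+1:ℝ)⁻¹) ^ 2 / ((n+1:ℝ)⁻¹) with hcdef
  have hεtend : Tendsto (fun n : ℕ => ((n:ℝ)+1)⁻¹) atTop (nhds 0) := by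
    exact Tendsto.congr (fun n => one_div _) tendsto_one_div_add_atTop_nhds_zero_nat
  have hctend : Tendsto c atTop (nhds 0) := by
    have hd : HasDerivAt f (deriv f 0) 0 := (hf.differentiable one_ne_zero 0).hasDerivAt
    have hslope := hasDerivAt_iff_tendsto_slope.1 hd
    have hslope' : Tendsto (fun ε => f ε / ε) (nhdsWithin 0 {(0:ℝ)}ᶜ) (nhds (deriv f 0)) := by
      apply hslope.congr'
      filter_upwards [self_mem_nhdsWithin] with ε hε
      simp [slope, h0, hε, div_eq_mul_inv, mul_comm]
    have hεne : Tendsto (fun n : ℕ => ((n:ℝ)+1)⁻¹) atTop (nhdsWithin 0 {(0:ℝ)}ᶜ) := by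
      apply tendsto_nhdsWithin_of_tendsto_nhds_of_eventually_within _ hεtend
      exact Eventually.of_forall fun n => by
        simp only [mem_compl_iff, mem_singleton_iff]
        positivity
    have h1 : Tendsto (fun n : ℕ => f (((n:ℝ)+1)⁻¹) / (((n:ℝ)+1)⁻¹)) atTop
        (nhds (deriv f 0)) := hslope'.comp hεne
    have h2 : Tendsto (fun n : ℕ => (f (((n:ℝ)+1)⁻¹) / (((n:ℝ)+1)⁻¹))^2 * (((n:ℝ)+1)⁻¹))
        atTop (nhds ((deriv f 0)^2 * 0)) := (h1.pow 2).mul hεtend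
    rw [mul_zero] at h2
    apply h2.congr
    intro n
    have hne : (((n:ℝ)+1)⁻¹) ≠ 0 := by positivity
    simp only [hcdef]
    rw [div_pow, pow_two ((n:ℝ)+1)⁻¹, div_mul_eq_mul_div, mul_div_mul_right _ _ hne]
  have hbound : ∀ n, ν (s n) ≤ ENNReal.ofReal (2 * c n + 4 * Jr) := by
    intro n
    rw [hνs n]
    have hεpos : (0:ℝ) < ((n:ℝ)+1)⁻¹ := by positivity
    have hεR : ((n:ℝ)+1)⁻¹ ≤ (n:ℝ)+1 := by
      calc ((n:ℝ)+1)⁻¹ ≤ 1 := by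
            rw [inv_le_one_iff₀]; right; linarith [Nat.cast_nonneg (α := ℝ) n]
        _ ≤ (n:ℝ)+1 := by linarith [Nat.cast_nonneg (α := ℝ) n]
    have hK := key _ _ hεpos hεR
    have hIcont : IntegrableOn (fun y => (f y / y)^2) (s n) := by
      apply (ContinuousOn.integrableOn_compact isCompact_Icc ?_).mono_set Ioc_subset_Icc_self
      exact (hfc.continuousOn.div continuousOn_id
        (fun y hy => (lt_of_lt_of_le hεpos hy.1).ne')).pow 2
    rw [← ofReal_integral_eq_lintegral_ofReal hIcont
      (Eventually.of_forall fun y => sq_nonneg _)]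
    exact ENNReal.ofReal_le_ofReal hK
  have htend2 : Tendsto (fun n => ENNReal.ofReal (2 * c n + 4 * Jr)) atTop
      (nhds (ENNReal.ofReal (4 * Jr))) := by
    have : Tendsto (fun n => 2 * c n + 4 * Jr) atTop (nhds (2 * 0 + 4 * Jr)) :=
      ((hctend.const_mul 2).add tendsto_const_nhds)
    rw [mul_zero, zero_add] at this
    exact (ENNReal.continuous_ofReal.tendsto _).comp this
  have hfinal : ν (Ioi 0) ≤ ENNReal.ofReal (4 * Jr) :=
    le_of_tendsto_of_tendsto' htend1 htend2 hbound
  rw [hνIoi] at hfinal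
  calc ∫⁻ y in Ioi (0:ℝ), ENNReal.ofReal ((f y / y)^2) ≤ ENNReal.ofReal (4 * Jr) := hfinal
    _ = ENNReal.ofReal 4 * ENNReal.ofReal Jr := ENNReal.ofReal_mul (by norm_num)
    _ = 4 * J := by rw [hJr]; norm_num

lemma prod_hardy (L : ℝ) (F : ℝ → ℝ → ℝ)
    (hF : ContDiff ℝ 1 (fun p : ℝ × ℝ => F p.1 p.2)) (h0 : ∀ x, F x 0 = 0) :
    ∫⁻ p in (Icc (0:ℝ) L) ×ˢ (Ioi (0:ℝ)), ENNReal.ofReal ((F p.1 p.2 / p.2)^2) ≤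
      4 * ∫⁻ p in (Icc (0:ℝ) L) ×ˢ (Ioi (0:ℝ)),
        ENNReal.ofReal (deriv (F p.1) p.2 ^ 2) := by
  have hFc : Continuous (fun p : ℝ × ℝ => F p.1 p.2) := hF.continuous
  have hFy : Continuous (fun p : ℝ × ℝ => deriv (F p.1) p.2) := by
    have h1 : Continuous (fun p : ℝ × ℝ => fderiv ℝ (fun q : ℝ×ℝ => F q.1 q.2) p (0,1)) :=
      (hF.continuous_fderiv one_ne_zero).clm_apply continuous_const
    exact h1.congr (fun p => (deriv_fiber F hF p.1 p.2).symm)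
  have hmeas1 : Measurable (fun p : ℝ × ℝ => ENNReal.ofReal ((F p.1 p.2 / p.2)^2)) :=
    ((hFc.measurable.div measurable_snd).pow_const 2).ennreal_ofReal
  have hmeas2 : Measurable (fun p : ℝ × ℝ => ENNReal.ofReal (deriv (F p.1) p.2 ^ 2)) :=
    ((hFy.measurable).pow_const 2).ennreal_ofReal
  have hprod : (volume : Measure (ℝ × ℝ)).restrict ((Icc (0:ℝ) L) ×ˢ (Ioi (0:ℝ)))
      = ((volume : Measure ℝ).restrict (Icc 0 L)).prod
        ((volume : Measure ℝ).restrict (Ioi 0)) := by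
    rw [Measure.volume_eq_prod, Measure.prod_restrict]
  rw [hprod, lintegral_prod _ hmeas1.aemeasurable, lintegral_prod _ hmeas2.aemeasurable,
    ← lintegral_const_mul' 4 _ (by norm_num)]
  apply lintegral_mono
  intro x
  have hfib : ContDiff ℝ 1 (F x) := hF.comp (contDiff_const.prodMk contDiff_id)
  exact hardy_aux (F x) hfib (h0 x)

lemma cs_wrap {α : Type*} [MeasurableSpace α] (μ : Measure α) (A B : α → ℝ≥0∞)
    (hA : AEMeasurable A μ) (hB : AEMeasurable B μ) :
    ∫⁻ a, A a * B a ∂μ ≤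
      (∫⁻ a, A a ^ (2:ℝ) ∂μ) ^ ((1:ℝ)/2) * (∫⁻ a, B a ^ (2:ℝ) ∂μ) ^ ((1:ℝ)/2) := by
  have hpq : (2:ℝ).HolderConjugate 2 := Real.HolderConjugate.two_two
  simpa using ENNReal.lintegral_mul_le_Lp_mul_Lq μ hpq hA hB

lemma four_rpow : (4:ℝ≥0∞) ^ ((1:ℝ)/2) = 2 := by
  have h4 : (4:ℝ≥0∞) = (2:ℝ≥0∞) ^ (2:ℝ) := by
    rw [show (2:ℝ) = ((2:ℕ):ℝ) by norm_num, ENNReal.rpow_natCast]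
    norm_num
  rw [h4, ← ENNReal.rpow_mul]
  norm_num



/-- Representative positivity-estimate bound: for `u_s ≥ c₀ > 0` with
`‖y ∂_y u_s‖_{L^∞} ≤ σ`, and `v, g` vanishing on `{y=0}` with `∂_y v, ∂_y g ∈ L²(Ω)`,
`|∬_Ω ∂_y(v/u_s)·g·∂_y u_s| ≤ C(c₀) σ (1+σ) ‖∂_y v‖_{L²} ‖∂_y g‖_{L²}`. -/
theorem stmt19 (c₀ : ℝ) (hc₀ : 0 < c₀) :
    ∃ C : ℝ, 0 < C ∧ ∀ (L σ : ℝ) (us v g : ℝ → ℝ → ℝ), 0 < L → 0 ≤ σ →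
      ContDiff ℝ 1 (fun p : ℝ × ℝ => us p.1 p.2) →
      ContDiff ℝ 1 (fun p : ℝ × ℝ => v p.1 p.2) →
      ContDiff ℝ 1 (fun p : ℝ × ℝ => g p.1 p.2) →
      (∀ p : ℝ × ℝ, p ∈ (Icc (0:ℝ) L) ×ˢ (Ici (0:ℝ)) → c₀ ≤ us p.1 p.2) →
      (∀ p : ℝ × ℝ, p ∈ (Icc (0:ℝ) L) ×ˢ (Ici (0:ℝ)) →
        |p.2 * deriv (us p.1) p.2| ≤ σ) →
      (∀ x, v x 0 = 0) → (∀ x, g x 0 = 0) →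
      Integrable (fun p : ℝ × ℝ => (deriv (v p.1) p.2) ^ 2)
        (volume.restrict ((Icc (0:ℝ) L) ×ˢ (Ici (0:ℝ)))) →
      Integrable (fun p : ℝ × ℝ => (deriv (g p.1) p.2) ^ 2)
        (volume.restrict ((Icc (0:ℝ) L) ×ˢ (Ici (0:ℝ)))) →
      |∫ p in ((Icc (0:ℝ) L) ×ˢ (Ici (0:ℝ))),
          deriv (fun y => v p.1 y / us p.1 y) p.2 * g p.1 p.2 * deriv (us p.1) p.2|
        ≤ C * σ * (1 + σ) *
          (∫ p in ((Icc (0:ℝ) L) ×ˢ (Ici (0:ℝ))), (deriv (v p.1) p.2) ^ 2) ^ ((1:ℝ)/2) *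
          (∫ p in ((Icc (0:ℝ) L) ×ˢ (Ici (0:ℝ))), (deriv (g p.1) p.2) ^ 2) ^ ((1:ℝ)/2) := by
  refine ⟨4 * (1/c₀ + 1/c₀^2), by positivity, ?_⟩
  intro L σ us v g hL hσ hus hv hg husl husd hv0 hg0 hvI hgI
  -- measure bookkeeping
  have hae : ((Icc (0:ℝ) L) ×ˢ (Ici (0:ℝ)) : Set (ℝ×ℝ)) =ᵐ[volume]
      ((Icc (0:ℝ) L) ×ˢ (Ioi (0:ℝ)) : Set (ℝ×ℝ)) := by
    have hnull : (volume : Measure (ℝ×ℝ)) ((univ : Set ℝ) ×ˢ ({0} : Set ℝ)) = 0 := by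
      rw [Measure.volume_eq_prod, Measure.prod_prod]
      simp
    rw [ae_eq_set]
    constructor
    · apply measure_mono_null ?_ hnull
      rintro ⟨x, y⟩ ⟨⟨h1, h2⟩, h3⟩
      have hy0 : y = 0 := by
        by_contra hne
        exact h3 ⟨h1, lt_of_le_of_ne h2 (Ne.symm hne)⟩
      exact ⟨mem_univ x, hy0⟩
    · have : ((Icc (0:ℝ) L) ×ˢ (Ioi (0:ℝ)) : Set (ℝ×ℝ)) \ ((Icc (0:ℝ) L) ×ˢ (Ici (0:ℝ))) = ∅ := by
        apply diff_eq_empty.2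
        exact prod_mono subset_rfl Ioi_subset_Ici_self
      rw [this]; exact measure_empty
  have hres : volume.restrict ((Icc (0:ℝ) L) ×ˢ (Ici (0:ℝ)))
      = volume.restrict ((Icc (0:ℝ) L) ×ˢ (Ioi (0:ℝ))) := Measure.restrict_congr_set hae
  set Ω' : Set (ℝ×ℝ) := (Icc (0:ℝ) L) ×ˢ (Ioi (0:ℝ)) with hΩ'def
  have hΩ'meas : MeasurableSet Ω' := measurableSet_Icc.prod measurableSet_Ioi
  -- partial derivative functions
  set vy : ℝ×ℝ → ℝ := fun p => fderiv ℝ (fun q : ℝ×ℝ => v q.1 q.2) p (0,1) with hvydef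
  set gy : ℝ×ℝ → ℝ := fun p => fderiv ℝ (fun q : ℝ×ℝ => g q.1 q.2) p (0,1) with hgydef
  set uy : ℝ×ℝ → ℝ := fun p => fderiv ℝ (fun q : ℝ×ℝ => us q.1 q.2) p (0,1) with huydef
  have hvyc : Continuous vy := (hv.continuous_fderiv one_ne_zero).clm_apply continuous_const
  have hgyc : Continuous gy := (hg.continuous_fderiv one_ne_zero).clm_apply continuous_const
  have hvc : Continuous (fun p : ℝ×ℝ => v p.1 p.2) := hv.continuous
  have hgc : Continuous (fun p : ℝ×ℝ => g p.1 p.2) := hg.continuous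
  -- the integrand
  set Φ : ℝ×ℝ → ℝ := fun p =>
    deriv (fun y => v p.1 y / us p.1 y) p.2 * g p.1 p.2 * deriv (us p.1) p.2 with hΦdef
  -- the real dominating function
  set W : ℝ×ℝ → ℝ := fun p =>
    (σ/c₀) * (|vy p| * (|g p.1 p.2| / p.2))
      + (σ/c₀)^2 * ((|v p.1 p.2| / p.2) * (|g p.1 p.2| / p.2)) with hWdef
  have hW : ∀ p ∈ Ω', ‖Φ p‖ ≤ W p := by
    rintro ⟨x, y⟩ hp
    have hx : x ∈ Icc (0:ℝ) L := hp.1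
    have hyp : (0:ℝ) < y := hp.2
    have hmem : ((x,y) : ℝ×ℝ) ∈ (Icc (0:ℝ) L) ×ˢ (Ici (0:ℝ)) := ⟨hx, le_of_lt hyp⟩
    have hu : c₀ ≤ us x y := husl (x,y) hmem
    have hune : us x y ≠ 0 := (lt_of_lt_of_le hc₀ hu).ne'
    have hdv : HasDerivAt (v x) (vy (x,y)) y := fiber_hasDerivAt v hv x y
    have hdu : HasDerivAt (us x) (uy (x,y)) y := fiber_hasDerivAt us hus x y
    have hq : deriv (fun t => v x t / us x t) y
        = (vy (x,y) * us x y - v x y * uy (x,y)) / (us x y)^2 := (hdv.div hdu hune).deriv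
    have hUb : |uy (x,y)| * y ≤ σ := by
      have h1 := husd (x,y) hmem
      rw [deriv_fiber us hus x y] at h1
      calc |uy (x,y)| * y = |y * uy (x,y)| := by
            rw [abs_mul, abs_of_pos hyp]; ring
        _ ≤ σ := h1
    show ‖deriv (fun t => v x t / us x t) y * g x y * deriv (us x) y‖ ≤ W (x,y)
    rw [Real.norm_eq_abs, hq, deriv_fiber us hus x y]
    exact ptwise_bound (vy (x,y)) (v x y) (g x y) (uy (x,y)) (us x y) y σ c₀ hyp hc₀ hσ hu hUb
  -- Step A: reduce to lintegral of the norm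
  have hA0 : |∫ p in (Icc (0:ℝ) L) ×ˢ (Ici (0:ℝ)), Φ p|
      ≤ (∫⁻ p in Ω', ENNReal.ofReal ‖Φ p‖).toReal := by
    rw [← Real.norm_eq_abs, hres]
    exact norm_integral_le_lintegral_norm Φ
  set A : ℝ×ℝ → ℝ≥0∞ := fun p => ENNReal.ofReal |vy p| with hAdef
  set B : ℝ×ℝ → ℝ≥0∞ := fun p => ENNReal.ofReal (|g p.1 p.2| / p.2) with hBdef
  set Avv : ℝ×ℝ → ℝ≥0∞ := fun p => ENNReal.ofReal (|v p.1 p.2| / p.2) with hAvvdef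
  set c1 : ℝ≥0∞ := ENNReal.ofReal (σ/c₀) with hc1def
  have hAm : Measurable A := hvyc.measurable.abs.ennreal_ofReal
  have hBm : Measurable B := ((hgc.measurable.abs).div measurable_snd).ennreal_ofReal
  have hAvvm : Measurable Avv := ((hvc.measurable.abs).div measurable_snd).ennreal_ofReal
  have hstep12 : ∫⁻ p in Ω', ENNReal.ofReal ‖Φ p‖
      ≤ ∫⁻ p in Ω', (c1 * (A p * B p) + c1^2 * (Avv p * B p)) := by
    apply lintegral_mono_ae
    rw [ae_restrict_iff' hΩ'meas]
    filter_upwards with p hp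
    have hyp : 0 < p.2 := hp.2
    refine (ENNReal.ofReal_le_ofReal (hW p hp)).trans (le_of_eq ?_)
    rw [hWdef]
    simp only
    rw [ENNReal.ofReal_add (by positivity) (by positivity),
        ENNReal.ofReal_mul (by positivity), ENNReal.ofReal_mul (by positivity),
        ENNReal.ofReal_mul (by positivity), ENNReal.ofReal_mul (by positivity),
        ENNReal.ofReal_pow (by positivity)]
  have hstep3 : ∫⁻ p in Ω', (c1 * (A p * B p) + c1^2 * (Avv p * B p))
      = c1 * (∫⁻ p in Ω', A p * B p) + c1^2 * (∫⁻ p in Ω', Avv p * B p) := by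
    rw [lintegral_add_left (f := fun p => c1 * (A p * B p)) ((hAm.mul hBm).const_mul c1),
        lintegral_const_mul' c1 _ ENNReal.ofReal_ne_top,
        lintegral_const_mul' (c1^2) _ (ENNReal.pow_ne_top ENNReal.ofReal_ne_top)]
  have hcs1 := cs_wrap (volume.restrict Ω') A B hAm.aemeasurable hBm.aemeasurable
  have hcs2 := cs_wrap (volume.restrict Ω') Avv B hAvvm.aemeasurable hBm.aemeasurable
  set Av := ∫⁻ p in Ω', ENNReal.ofReal (vy p ^ 2) with hAvdef
  set Ag := ∫⁻ p in Ω', ENNReal.ofReal (gy p ^ 2) with hAgdef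
  have hA2 : ∫⁻ p in Ω', A p ^ (2:ℝ) = Av := by
    apply lintegral_congr
    intro p
    rw [hAdef]
    simp only
    rw [ENNReal.ofReal_rpow_of_nonneg (abs_nonneg _) (by norm_num : (0:ℝ) ≤ 2)]
    congr 1
    rw [show (2:ℝ) = ((2:ℕ):ℝ) by norm_num, Real.rpow_natCast, sq_abs]
  have hB2 : ∫⁻ p in Ω', B p ^ (2:ℝ)
      = ∫⁻ p in Ω', ENNReal.ofReal ((g p.1 p.2 / p.2)^2) := by
    apply lintegral_congr_ae
    refine (ae_restrict_iff' hΩ'meas).2 (Eventually.of_forall fun p hp => ?_)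
    have hyp : 0 < p.2 := hp.2
    rw [hBdef]
    simp only
    rw [ENNReal.ofReal_rpow_of_nonneg (by positivity) (by norm_num : (0:ℝ) ≤ 2)]
    congr 1
    rw [show (2:ℝ) = ((2:ℕ):ℝ) by norm_num, Real.rpow_natCast, div_pow, div_pow, sq_abs]
  have hAvv2 : ∫⁻ p in Ω', Avv p ^ (2:ℝ)
      = ∫⁻ p in Ω', ENNReal.ofReal ((v p.1 p.2 / p.2)^2) := by
    apply lintegral_congr_ae
    refine (ae_restrict_iff' hΩ'meas).2 (Eventually.of_forall fun p hp => ?_)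
    have hyp : 0 < p.2 := hp.2
    rw [hAvvdef]
    simp only
    rw [ENNReal.ofReal_rpow_of_nonneg (by positivity) (by norm_num : (0:ℝ) ≤ 2)]
    congr 1
    rw [show (2:ℝ) = ((2:ℕ):ℝ) by norm_num, Real.rpow_natCast, div_pow, div_pow, sq_abs]
  have hhg : ∫⁻ p in Ω', ENNReal.ofReal ((g p.1 p.2 / p.2)^2) ≤ 4 * Ag := by
    have h1 := prod_hardy L g hg hg0
    have h2 : ∫⁻ p in (Icc (0:ℝ) L) ×ˢ (Ioi (0:ℝ)), ENNReal.ofReal (deriv (g p.1) p.2 ^ 2)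
        = Ag := lintegral_congr fun p => by rw [deriv_fiber g hg p.1 p.2]
    rw [← h2]
    exact h1
  have hhv : ∫⁻ p in Ω', ENNReal.ofReal ((v p.1 p.2 / p.2)^2) ≤ 4 * Av := by
    have h1 := prod_hardy L v hv hv0
    have h2 : ∫⁻ p in (Icc (0:ℝ) L) ×ˢ (Ioi (0:ℝ)), ENNReal.ofReal (deriv (v p.1) p.2 ^ 2)
        = Av := lintegral_congr fun p => by rw [deriv_fiber v hv p.1 p.2]
    rw [← h2]
    exact h1
  have hmain : ∫⁻ p in Ω', ENNReal.ofReal ‖Φ p‖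
      ≤ (2*c1 + 4*c1^2) * (Av ^ ((1:ℝ)/2) * Ag ^ ((1:ℝ)/2)) := by
    have e1 : ∫⁻ p in Ω', A p * B p
        ≤ Av ^ ((1:ℝ)/2) * (4 * Ag) ^ ((1:ℝ)/2) := by
      refine hcs1.trans ?_
      rw [hA2, hB2]
      exact mul_le_mul' le_rfl (ENNReal.rpow_le_rpow hhg (by norm_num))
    have e2 : ∫⁻ p in Ω', Avv p * B p
        ≤ (4 * Av) ^ ((1:ℝ)/2) * (4 * Ag) ^ ((1:ℝ)/2) := by
      refine hcs2.trans ?_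
      rw [hAvv2, hB2]
      exact mul_le_mul' (ENNReal.rpow_le_rpow hhv (by norm_num))
        (ENNReal.rpow_le_rpow hhg (by norm_num))
    calc ∫⁻ p in Ω', ENNReal.ofReal ‖Φ p‖
        ≤ ∫⁻ p in Ω', (c1 * (A p * B p) + c1^2 * (Avv p * B p)) := hstep12
      _ = c1 * (∫⁻ p in Ω', A p * B p) + c1^2 * (∫⁻ p in Ω', Avv p * B p) := hstep3
      _ ≤ c1 * (Av ^ ((1:ℝ)/2) * (4 * Ag) ^ ((1:ℝ)/2))
          + c1^2 * ((4 * Av) ^ ((1:ℝ)/2) * (4 * Ag) ^ ((1:ℝ)/2)) :=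
        add_le_add (mul_le_mul_right e1 c1) (mul_le_mul_right e2 (c1^2))
      _ = (2*c1 + 4*c1^2) * (Av ^ ((1:ℝ)/2) * Ag ^ ((1:ℝ)/2)) := by
        rw [ENNReal.mul_rpow_of_nonneg 4 Ag (by norm_num),
            ENNReal.mul_rpow_of_nonneg 4 Av (by norm_num), four_rpow]
        ring
  set Iv := ∫ p in (Icc (0:ℝ) L) ×ˢ (Ici (0:ℝ)), (deriv (v p.1) p.2)^2 with hIvdef
  set Ig := ∫ p in (Icc (0:ℝ) L) ×ˢ (Ici (0:ℝ)), (deriv (g p.1) p.2)^2 with hIgdef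
  have hIvnn : 0 ≤ Iv := integral_nonneg fun p => sq_nonneg _
  have hIgnn : 0 ≤ Ig := integral_nonneg fun p => sq_nonneg _
  have hAvIv : Av = ENNReal.ofReal Iv := by
    have hvI' : Integrable (fun p : ℝ×ℝ => deriv (v p.1) p.2 ^ 2) (volume.restrict Ω') :=
      hres ▸ hvI
    have h1 : ENNReal.ofReal (∫ p in Ω', deriv (v p.1) p.2 ^ 2)
        = ∫⁻ p in Ω', ENNReal.ofReal (deriv (v p.1) p.2 ^ 2) :=
      ofReal_integral_eq_lintegral_ofReal hvI' (Eventually.of_forall fun p => sq_nonneg _)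
    have h2 : ∫⁻ p in Ω', ENNReal.ofReal (deriv (v p.1) p.2 ^ 2) = Av :=
      lintegral_congr fun p => by rw [deriv_fiber v hv p.1 p.2]
    have h3 : ∫ p in Ω', deriv (v p.1) p.2 ^ 2 = Iv := by
      rw [hIvdef, hres]
    rw [← h2, ← h1, h3]
  have hAgIg : Ag = ENNReal.ofReal Ig := by
    have hgI' : Integrable (fun p : ℝ×ℝ => deriv (g p.1) p.2 ^ 2) (volume.restrict Ω') :=
      hres ▸ hgI
    have h1 : ENNReal.ofReal (∫ p in Ω', deriv (g p.1) p.2 ^ 2)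
        = ∫⁻ p in Ω', ENNReal.ofReal (deriv (g p.1) p.2 ^ 2) :=
      ofReal_integral_eq_lintegral_ofReal hgI' (Eventually.of_forall fun p => sq_nonneg _)
    have h2 : ∫⁻ p in Ω', ENNReal.ofReal (deriv (g p.1) p.2 ^ 2) = Ag :=
      lintegral_congr fun p => by rw [deriv_fiber g hg p.1 p.2]
    have h3 : ∫ p in Ω', deriv (g p.1) p.2 ^ 2 = Ig := by
      rw [hIgdef, hres]
    rw [← h2, ← h1, h3]
  have hhalfv : Av ^ ((1:ℝ)/2) = ENNReal.ofReal (Iv ^ ((1:ℝ)/2)) := by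
    rw [hAvIv]
    exact ENNReal.ofReal_rpow_of_nonneg hIvnn (by norm_num)
  have hhalfg : Ag ^ ((1:ℝ)/2) = ENNReal.ofReal (Ig ^ ((1:ℝ)/2)) := by
    rw [hAgIg]
    exact ENNReal.ofReal_rpow_of_nonneg hIgnn (by norm_num)
  have hD : (2*c1 + 4*c1^2) = ENNReal.ofReal (2*(σ/c₀) + 4*(σ/c₀)^2) := by
    rw [ENNReal.ofReal_add (by positivity) (by positivity),
        ENNReal.ofReal_mul (by norm_num), ENNReal.ofReal_mul (by norm_num),
        ENNReal.ofReal_pow (by positivity), hc1def]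
    norm_num
  have hfinal2 : ∫⁻ p in Ω', ENNReal.ofReal ‖Φ p‖
      ≤ ENNReal.ofReal ((2*(σ/c₀) + 4*(σ/c₀)^2) * (Iv ^ ((1:ℝ)/2) * Ig ^ ((1:ℝ)/2))) := by
    rw [ENNReal.ofReal_mul (by positivity), ENNReal.ofReal_mul (by positivity),
        ← hD, ← hhalfv, ← hhalfg]
    exact hmain
  have hrhs : (∫⁻ p in Ω', ENNReal.ofReal ‖Φ p‖).toReal
      ≤ (2*(σ/c₀) + 4*(σ/c₀)^2) * (Iv ^ ((1:ℝ)/2) * Ig ^ ((1:ℝ)/2)) := by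
    refine (ENNReal.toReal_mono ENNReal.ofReal_ne_top hfinal2).trans_eq ?_
    rw [ENNReal.toReal_ofReal]
    positivity
  refine hA0.trans (hrhs.trans ?_)
  have hcoef : 2*(σ/c₀) + 4*(σ/c₀)^2 ≤ 4 * (1/c₀ + 1/c₀^2) * σ * (1+σ) := by
    have ht : (0:ℝ) < 1/c₀ := by positivity
    have h1 : σ/c₀ = σ * (1/c₀) := by ring
    have h2 : (σ/c₀)^2 = σ^2 * (1/c₀)^2 := by rw [div_pow]; ring
    have h3 : 1/c₀^2 = (1/c₀)^2 := by rw [one_div, one_div, ← inv_pow]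
    rw [h2, h1, h3]
    nlinarith [mul_nonneg hσ ht.le, mul_nonneg (mul_nonneg hσ hσ) (mul_nonneg ht.le ht.le),
      mul_nonneg hσ (mul_nonneg ht.le ht.le), sq_nonneg σ, sq_nonneg (1/c₀)]
  calc (2*(σ/c₀) + 4*(σ/c₀)^2) * (Iv ^ ((1:ℝ)/2) * Ig ^ ((1:ℝ)/2))
      ≤ (4 * (1/c₀ + 1/c₀^2) * σ * (1+σ)) * (Iv ^ ((1:ℝ)/2) * Ig ^ ((1:ℝ)/2)) := by
        apply mul_le_mul_of_nonneg_right hcoef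
        have := Real.rpow_nonneg hIvnn ((1:ℝ)/2)
        have := Real.rpow_nonneg hIgnn ((1:ℝ)/2)
        positivity
    _ = 4 * (1/c₀ + 1/c₀^2) * σ * (1+σ) * Iv ^ ((1:ℝ)/2) * Ig ^ ((1:ℝ)/2) := by ring
end
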